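/- arXiv:1304.6629 — 2 statements merged into one kernel-verified Lean document; each statement's English description precedes it below -/
import Mathlib

section
/- Let Xⁿ (n ≥ 1) and X be continuous ℝ^d-valued stochastic processes on [0,T]. Suppose there exist α₀ > 0 and nonnegative random variables Kₙ, K such that almost surely |Xⁿ(t) − Xⁿ(s)| ≤ Kₙ|t − s|^{α₀} and |X(t) − X(s)| ≤ K|t − s|^{α₀} for all s, t ∈ [0,T], with sup_n E[Kₙ] < ∞ and E[K] < ∞. If for every fixed t ∈ [0,T] the random variables |Xⁿ(t) − X(t)| converge to 0 in probability as n → ∞, then sup_{0≤t≤T} |Xⁿ(t) − X(t)| converges to 0 in probability as n → ∞. -/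
open MeasureTheory Set Filter Metric
open scoped ENNReal NNReal

/-!
Off the event `{Kₙ + K ≥ c}` the difference `Xⁿ - X` is `α₀`-Hölder with constant `c`, so its
supremum over `[0, T]` exceeds its maximum over a finite `η`-net by at most `c η^{α₀}`. The
maximum over the net tends to `0` in probability by the pointwise hypothesis, and Markov's
inequality with the uniform bound on `E[Kₙ + K]` makes `{Kₙ + K ≥ c}` uniformly small for
large `c`.
-/

namespace MeasureTheory

variable {Ω ι : Type*} {m0 : MeasurableSpace Ω} {μ : Measure Ω} {l : Filter ι}

def BoundedAboveInMeasure (μ : Measure Ω) (L : ι → Ω → ℝ) : Prop :=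
  ∀ δ > 0, ∃ c : ℝ, ∀ i, μ {ω | c ≤ L i ω} ≤ δ

theorem boundedAboveInMeasure_of_lintegral_le {L : ι → Ω → ℝ}
    (hL : ∀ i, AEMeasurable (L i) μ) {C : ℝ≥0∞} (hC : C ≠ ∞)
    (hLC : ∀ i, ∫⁻ ω, ENNReal.ofReal (L i ω) ∂μ ≤ C) : BoundedAboveInMeasure μ L := by
  intro δ hδ
  obtain ⟨n, hn⟩ := ENNReal.exists_nat_gt (ENNReal.div_ne_top hC hδ.ne')
  have hn0 : (n : ℝ≥0∞) ≠ 0 := (lt_of_le_of_lt zero_le hn).ne'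
  refine ⟨n, fun i => ?_⟩
  calc μ {ω | (n : ℝ) ≤ L i ω} ≤ μ {ω | (n : ℝ≥0∞) ≤ ENNReal.ofReal (L i ω)} :=
        measure_mono fun ω hω => by simpa using ENNReal.ofReal_le_ofReal hω
    _ ≤ (∫⁻ ω, ENNReal.ofReal (L i ω) ∂μ) / n :=
        meas_ge_le_lintegral_div (hL i).ennreal_ofReal hn0 (ENNReal.natCast_ne_top n)
    _ ≤ C / n := by gcongr; exact hLC i
    _ ≤ δ := by
        rw [ENNReal.div_le_iff hn0 (ENNReal.natCast_ne_top n), mul_comm]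
        exact ((ENNReal.div_lt_iff (.inl hδ.ne') (.inr hC)).1 hn).le

theorem tendstoInMeasure_zero_of_ae_le_mul_add {Z L : ι → Ω → ℝ} (hZ : ∀ i ω, 0 ≤ Z i ω)
    (hL : BoundedAboveInMeasure μ L)
    (happrox : ∀ r > 0, ∃ M : ι → Ω → ℝ, TendstoInMeasure μ M l (fun _ => 0) ∧
      ∀ i, ∀ᵐ ω ∂μ, Z i ω ≤ L i ω * r + M i ω) :
    TendstoInMeasure μ Z l (fun _ => 0) := by
  rw [tendstoInMeasure_iff_dist]
  intro ε hε
  refine ENNReal.tendsto_nhds_zero.2 fun δ hδ => ?_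
  obtain ⟨c, hc⟩ := hL (δ / 2) (ENNReal.half_pos hδ.ne')
  set r := ε / (2 * (|c| + 1))
  have hr : 0 < r := by positivity
  have hcr : c * r < ε / 2 :=
    calc c * r ≤ |c| * r := by gcongr; exact le_abs_self c
      _ < (|c| + 1) * r := by gcongr; linarith
      _ = ε / 2 := by simp only [r]; field_simp
  obtain ⟨M, hM, hZM⟩ := happrox r hr
  have hMsmall := ENNReal.tendsto_nhds_zero.1
    (tendstoInMeasure_iff_dist.1 hM (ε / 2) (half_pos hε)) (δ / 2) (ENNReal.half_pos hδ.ne')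
  filter_upwards [hMsmall] with i hi
  have hsub : {ω | ε ≤ dist (Z i ω) 0}
      ≤ᵐ[μ] ({ω | c ≤ L i ω} ∪ {ω | ε / 2 ≤ dist (M i ω) 0} : Set Ω) := by
    filter_upwards [hZM i] with ω hω (hεZ : ε ≤ dist (Z i ω) 0)
    change c ≤ L i ω ∨ ε / 2 ≤ dist (M i ω) 0
    by_contra! hbad
    simp only [Real.dist_eq, sub_zero] at hbad hεZ
    have := mul_lt_mul_of_pos_right hbad.1 hr
    have := le_abs_self (M i ω)
    rw [abs_of_nonneg (hZ i ω)] at hεZ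
    linarith
  calc μ {ω | ε ≤ dist (Z i ω) 0}
      ≤ μ ({ω | c ≤ L i ω} ∪ {ω | ε / 2 ≤ dist (M i ω) 0}) := measure_mono_ae hsub
    _ ≤ δ / 2 + δ / 2 := (measure_union_le _ _).trans (add_le_add (hc i) hi)
    _ = δ := ENNReal.add_halves δ

theorem tendstoInMeasure_finset_sup_nnnorm {κ E : Type*} [SeminormedAddCommGroup E]
    {t : Finset κ} {Y : ι → κ → Ω → E}
    (hY : ∀ x ∈ t, TendstoInMeasure μ (fun i => Y i x) l (fun _ => 0)) :
    TendstoInMeasure μ (fun i ω => ((t.sup fun x => ‖Y i x ω‖₊ : ℝ≥0) : ℝ)) l (fun _ => 0) := by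
  simp_rw [tendstoInMeasure_iff_norm, sub_zero] at hY ⊢
  intro ε hε
  have hsub : ∀ i, μ {ω | ε ≤ ‖((t.sup fun x => ‖Y i x ω‖₊ : ℝ≥0) : ℝ)‖}
      ≤ ∑ x ∈ t, μ {ω | ε ≤ ‖Y i x ω‖} := fun i => by
    refine (measure_mono fun ω hω => ?_).trans (measure_biUnion_finset_le t _)
    rw [mem_ofPred_eq, Real.norm_of_nonneg (NNReal.coe_nonneg _), ← Real.toNNReal_le_iff_le_coe,
      Finset.le_sup_iff (Real.toNNReal_pos.2 hε)] at hω
    obtain ⟨x, hx, hεx⟩ := hω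
    exact mem_biUnion hx (Real.toNNReal_le_iff_le_coe.1 hεx)
  refine tendsto_of_tendsto_of_tendsto_of_le_of_le tendsto_const_nhds ?_ (fun _ => zero_le) hsub
  simpa using tendsto_finsetSum t fun x hx => hY x hx ε hε

theorem norm_le_mul_rpow_add_finset_sup_of_subset_biUnion_ball {α E : Type*}
    [PseudoMetricSpace α] [SeminormedAddCommGroup E] {S : Set α} {t : Finset α} {f : α → E}
    {L β η : ℝ} (hL : 0 ≤ L) (hβ : 0 ≤ β)
    (hf : ∀ x ∈ S, ∀ y ∈ S, ‖f x - f y‖ ≤ L * dist x y ^ β)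
    (htS : ∀ y ∈ t, y ∈ S) (hcover : S ⊆ ⋃ y ∈ t, ball y η) {x : α} (hx : x ∈ S) :
    ‖f x‖ ≤ L * η ^ β + (t.sup fun y => ‖f y‖₊ : ℝ≥0) := by
  obtain ⟨y, hyt, hxy⟩ : ∃ y ∈ t, dist x y < η := by simpa using hcover hx
  calc ‖f x‖ ≤ ‖f x - f y‖ + ‖f y‖ := norm_le_norm_sub_add _ _
    _ ≤ L * η ^ β + (t.sup fun y => ‖f y‖₊ : ℝ≥0) := by
      gcongr
      · exact (hf x hx y (htS y hyt)).trans (by gcongr)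
      · exact_mod_cast Finset.le_sup (f := fun y => ‖f y‖₊) hyt

theorem tendstoInMeasure_iSup_norm_of_holder {α E : Type*} [PseudoMetricSpace α]
    [SeminormedAddCommGroup E] {S : Set α} (hS : IsCompact S) {Y : ι → α → Ω → E}
    {L : ι → Ω → ℝ} {β : ℝ} (hβ : 0 < β) (hL : ∀ i ω, 0 ≤ L i ω)
    (hLbdd : BoundedAboveInMeasure μ L)
    (hY : ∀ i, ∀ᵐ ω ∂μ, ∀ x ∈ S, ∀ y ∈ S, ‖Y i x ω - Y i y ω‖ ≤ L i ω * dist x y ^ β)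
    (hpt : ∀ x ∈ S, TendstoInMeasure μ (fun i => Y i x) l (fun _ => 0)) :
    TendstoInMeasure μ (fun i ω => ⨆ x : S, ‖Y i x ω‖) l (fun _ => 0) := by
  refine tendstoInMeasure_zero_of_ae_le_mul_add
    (fun i ω => Real.iSup_nonneg fun _ => norm_nonneg _) hLbdd fun r hr => ?_
  set η := r ^ β⁻¹
  have hη : 0 < η := by positivity
  have hηβ : η ^ β = r := Real.rpow_inv_rpow hr.le hβ.ne'
  obtain ⟨t, htS, hcover⟩ := hS.elim_nhds_subcover (fun y => ball y η)
    fun y _ => ball_mem_nhds y hη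
  refine ⟨fun i ω => (t.sup fun y => ‖Y i y ω‖₊ : ℝ≥0),
    tendstoInMeasure_finset_sup_nnnorm fun y hy => hpt y (htS y hy), fun i => ?_⟩
  filter_upwards [hY i] with ω hω
  refine Real.iSup_le (fun x => ?_)
    (add_nonneg (mul_nonneg (hL i ω) (by positivity)) (NNReal.coe_nonneg _))
  rw [← hηβ]
  exact norm_le_mul_rpow_add_finset_sup_of_subset_biUnion_ball (hL i ω) hβ.le hω htS hcover x.2

end MeasureTheory

theorem sup_tendsto_in_measure_of_pointwise_general
    {Ω : Type*} {m0 : MeasurableSpace Ω} (P : Measure Ω)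
    {d : ℕ} (T : ℝ)
    (Xn : ℕ → ℝ → Ω → EuclideanSpace ℝ (Fin d))
    (X : ℝ → Ω → EuclideanSpace ℝ (Fin d))
    (α₀ : ℝ) (hα₀ : 0 < α₀)
    (Kn : ℕ → Ω → ℝ) (K : Ω → ℝ)
    (hKnmeas : ∀ n, Measurable (Kn n)) (hKmeas : Measurable K)
    (hKnpos : ∀ n ω, 0 ≤ Kn n ω) (hKpos : ∀ ω, 0 ≤ K ω)
    (hKn : ∀ n, ∀ᵐ ω ∂P, ∀ s ∈ Icc (0 : ℝ) T, ∀ t ∈ Icc (0 : ℝ) T,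
      ‖Xn n t ω - Xn n s ω‖ ≤ Kn n ω * |t - s| ^ α₀)
    (hK : ∀ᵐ ω ∂P, ∀ s ∈ Icc (0 : ℝ) T, ∀ t ∈ Icc (0 : ℝ) T,
      ‖X t ω - X s ω‖ ≤ K ω * |t - s| ^ α₀)
    (hKnint : ∃ C : ℝ≥0∞, C < ⊤ ∧ ∀ n, (∫⁻ ω, ENNReal.ofReal (Kn n ω) ∂P) ≤ C)
    (hKint : (∫⁻ ω, ENNReal.ofReal (K ω) ∂P) < ⊤)
    (hptwise : ∀ t ∈ Icc (0 : ℝ) T,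
      TendstoInMeasure P (fun n ω => Xn n t ω) atTop (fun ω => X t ω)) :
    TendstoInMeasure P (fun n ω => ⨆ t : Icc (0 : ℝ) T, ‖Xn n t.1 ω - X t.1 ω‖)
      atTop (fun _ => (0 : ℝ)) := by
  obtain ⟨C, hC, hKnC⟩ := hKnint
  have hlintegral_le : ∀ n, ∫⁻ ω, ENNReal.ofReal (Kn n ω + K ω) ∂P
      ≤ C + ∫⁻ ω, ENNReal.ofReal (K ω) ∂P := fun n => by
    simp_rw [ENNReal.ofReal_add (hKnpos n _) (hKpos _)]
    rw [lintegral_add_left (hKnmeas n).ennreal_ofReal]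
    gcongr
    exact hKnC n
  refine tendstoInMeasure_iSup_norm_of_holder (Y := fun n t ω => Xn n t ω - X t ω)
    (L := fun n ω => Kn n ω + K ω) isCompact_Icc hα₀
    (fun n ω => add_nonneg (hKnpos n ω) (hKpos ω))
    (boundedAboveInMeasure_of_lintegral_le (fun n => ((hKnmeas n).add hKmeas).aemeasurable)
      (ENNReal.add_ne_top.2 ⟨hC.ne, hKint.ne⟩) hlintegral_le)
    (fun n => ?_) fun t ht => ?_
  · filter_upwards [hKn n, hK] with ω hωn hω t ht s hs
    calc ‖Xn n t ω - X t ω - (Xn n s ω - X s ω)‖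
        ≤ ‖Xn n t ω - Xn n s ω‖ + ‖X t ω - X s ω‖ := by
          rw [sub_sub_sub_comm]; exact norm_sub_le _ _
      _ ≤ (Kn n ω + K ω) * dist t s ^ α₀ := by
          rw [Real.dist_eq, add_mul]; exact add_le_add (hωn s hs t ht) (hω s hs t ht)
  · simpa [tendstoInMeasure_iff_norm] using hptwise t ht

/-- Let `Xⁿ` and `X` be continuous `ℝ^d`-valued processes on `[0, T]`.
Suppose there are `α₀ > 0` and nonnegative random variables `Kₙ, K` such that almost
surely `|Xⁿ(t) − Xⁿ(s)| ≤ Kₙ |t − s|^{α₀}` and `|X(t) − X(s)| ≤ K |t − s|^{α₀}` for all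
`s, t ∈ [0, T]`, with `sup_n E[Kₙ] < ∞` and `E[K] < ∞`.  If for every fixed `t ∈ [0, T]`
the random variables `|Xⁿ(t) − X(t)|` converge to `0` in probability, then
`sup_{0 ≤ t ≤ T} |Xⁿ(t) − X(t)|` converges to `0` in probability. -/
theorem sup_tendsto_in_measure_of_pointwise
    {Ω : Type*} {m0 : MeasurableSpace Ω} (P : Measure Ω) [IsProbabilityMeasure P]
    {d : ℕ} (T : ℝ) (hT : 0 < T)
    (Xn : ℕ → ℝ → Ω → EuclideanSpace ℝ (Fin d))
    (X : ℝ → Ω → EuclideanSpace ℝ (Fin d))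
    (hXncont : ∀ n ω, ContinuousOn (fun t => Xn n t ω) (Icc 0 T))
    (hXcont : ∀ ω, ContinuousOn (fun t => X t ω) (Icc 0 T))
    (α₀ : ℝ) (hα₀ : 0 < α₀)
    (Kn : ℕ → Ω → ℝ) (K : Ω → ℝ)
    (hKnmeas : ∀ n, Measurable (Kn n)) (hKmeas : Measurable K)
    (hKnpos : ∀ n ω, 0 ≤ Kn n ω) (hKpos : ∀ ω, 0 ≤ K ω)
    (hKn : ∀ n, ∀ᵐ ω ∂P, ∀ s ∈ Icc (0 : ℝ) T, ∀ t ∈ Icc (0 : ℝ) T,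
      ‖Xn n t ω - Xn n s ω‖ ≤ Kn n ω * |t - s| ^ α₀)
    (hK : ∀ᵐ ω ∂P, ∀ s ∈ Icc (0 : ℝ) T, ∀ t ∈ Icc (0 : ℝ) T,
      ‖X t ω - X s ω‖ ≤ K ω * |t - s| ^ α₀)
    (hKnint : ∃ C : ℝ≥0∞, C < ⊤ ∧ ∀ n, (∫⁻ ω, ENNReal.ofReal (Kn n ω) ∂P) ≤ C)
    (hKint : (∫⁻ ω, ENNReal.ofReal (K ω) ∂P) < ⊤)
    (hptwise : ∀ t ∈ Icc (0 : ℝ) T,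
      TendstoInMeasure P (fun n ω => Xn n t ω) atTop (fun ω => X t ω)) :
    TendstoInMeasure P (fun n ω => ⨆ t : Icc (0 : ℝ) T, ‖Xn n t.1 ω - X t.1 ω‖)
      atTop (fun _ => (0 : ℝ)) :=
  sup_tendsto_in_measure_of_pointwise_general (m0 := m0) P T Xn X α₀ hα₀ Kn K hKnmeas hKmeas hKnpos
    hKpos hKn hK hKnint hKint hptwise
end

section
/- Let D̄ be a bounded subset of ℝ^d and let Xⁿ (n ≥ 1) and X be continuous D̄-valued stochastic processes on [0,T]. Suppose that for every p ≥ 2 there are constants C₁(p), independent of n, and C₂(p) such that E[|Xⁿ(t) − Xⁿ(s)|^p] ≤ C₁(p)|t − s|^{p/2} for all n and E[|X(t) − X(s)|^p] ≤ C₂(p)|t − s|^{p/2}, for all s, t ∈ [0,T]. If lim_{n→∞} E[|Xⁿ(t) − X(t)|²] = 0 for every fixed t ∈ [0,T], then for every p > 0, lim_{n→∞} E[sup_{0≤t≤T} |Xⁿ(t) − X(t)|^p] = 0. -/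
/-! Since the paths stay in the bounded set `D̄`, the supremum `sup_t |Xⁿ(t) − X(t)|` is uniformly
bounded, so it suffices that it tends to zero in probability. Markov's inequality and the
fourth-moment bounds control, level by level, the increments of `Xⁿ` and `X` along the dyadic grid
of `[0, T]`; chaining then gives, uniformly in `n`, an event of small probability off which both
processes oscillate little over time lags `T / 2ᵐ`. At the finitely many grid points of level `m`,
`Xⁿ → X` in probability by the `L²` hypothesis. -/

open MeasureTheory Set Filter
open scoped ENNReal Topology

noncomputable def dyadicPoint (T : ℝ) (j i : ℕ) : ℝ := i * (T / 2 ^ j)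

noncomputable def dyadicIndex (T : ℝ) (j : ℕ) (x : ℝ) : ℕ := ⌊x / (T / 2 ^ j)⌋₊

section Dyadic

variable {T x : ℝ} {i j : ℕ}

lemma dyadicPoint_mem_Icc (hT : 0 ≤ T) (hi : i ≤ 2 ^ j) : dyadicPoint T j i ∈ Icc 0 T := by
  refine ⟨by unfold dyadicPoint; positivity, ?_⟩
  calc dyadicPoint T j i ≤ 2 ^ j * (T / 2 ^ j) := by unfold dyadicPoint; gcongr; exact_mod_cast hi
    _ = T := by field_simp

lemma dyadicPoint_succ_sub (T : ℝ) (j i : ℕ) :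
    dyadicPoint T j (i + 1) - dyadicPoint T j i = T / 2 ^ j := by
  simp only [dyadicPoint]; push_cast; ring

lemma dyadicPoint_succ_two_mul (T : ℝ) (j i : ℕ) :
    dyadicPoint T (j + 1) (2 * i) = dyadicPoint T j i := by
  simp only [dyadicPoint]; push_cast; field_simp; ring

lemma dyadicPoint_dyadicIndex_le (hT : 0 < T) (hx : 0 ≤ x) :
    dyadicPoint T j (dyadicIndex T j x) ≤ x :=
  (le_div_iff₀ (by positivity)).1 (Nat.floor_le (by positivity))

lemma lt_dyadicPoint_dyadicIndex_add (hT : 0 < T) :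
    x < dyadicPoint T j (dyadicIndex T j x) + T / 2 ^ j := by
  have := (div_lt_iff₀ (by positivity)).1 (Nat.lt_floor_add_one (x / (T / 2 ^ j)))
  simp only [dyadicPoint, dyadicIndex]; linarith

lemma dyadicIndex_le (hT : 0 < T) (hx : x ≤ T) : dyadicIndex T j x ≤ 2 ^ j := by
  apply Nat.floor_le_of_le
  rw [div_le_iff₀ (by positivity)]; push_cast; field_simp; exact hx

lemma dyadicIndex_eq_succ_div_two (T x : ℝ) (j : ℕ) :
    dyadicIndex T j x = dyadicIndex T (j + 1) x / 2 := by
  rw [dyadicIndex, dyadicIndex, ← Nat.floor_div_natCast]; congr 1; push_cast; field_simp; ring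

lemma dyadicIndex_mono (hT : 0 < T) {s t : ℝ} (hst : s ≤ t) :
    dyadicIndex T j s ≤ dyadicIndex T j t :=
  Nat.floor_le_floor (by gcongr)

lemma dyadicIndex_le_add_one (hT : 0 < T) {s t : ℝ} (hs : 0 ≤ s) (hst : t - s ≤ T / 2 ^ j) :
    dyadicIndex T j t ≤ dyadicIndex T j s + 1 := by
  rw [dyadicIndex, dyadicIndex, ← Nat.floor_add_one (by positivity)]
  apply Nat.floor_le_floor
  rw [div_add_one (by positivity), div_le_div_iff_of_pos_right (by positivity)]; linarith

lemma tendsto_dyadicPoint_dyadicIndex (hT : 0 < T) (hx : 0 ≤ x) :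
    Tendsto (fun j => dyadicPoint T j (dyadicIndex T j x)) atTop (𝓝 x) := by
  have hlow : Tendsto (fun j : ℕ => x - T / 2 ^ j) atTop (𝓝 x) := by
    simpa using tendsto_const_nhds.sub
      (tendsto_const_nhds.div_atTop (tendsto_pow_atTop_atTop_of_one_lt (one_lt_two (α := ℝ))))
  exact tendsto_of_tendsto_of_tendsto_of_le_of_le hlow tendsto_const_nhds
    (fun j => by linarith [lt_dyadicPoint_dyadicIndex_add (j := j) (x := x) hT])
    (fun j => dyadicPoint_dyadicIndex_le hT hx)

end Dyadic

section Chaining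

variable {E : Type*} [PseudoMetricSpace E] {T : ℝ} {f : ℝ → E} {a : ℕ → ℝ} {m : ℕ}

lemma dist_dyadicPoint_dyadicIndex_succ_le (hT : 0 < T) {x : ℝ} (hx : x ∈ Icc 0 T) {j : ℕ} {b : ℝ}
    (hb : 0 ≤ b) (hstep : ∀ i < 2 ^ (j + 1),
      dist (f (dyadicPoint T (j + 1) (i + 1))) (f (dyadicPoint T (j + 1) i)) ≤ b) :
    dist (f (dyadicPoint T j (dyadicIndex T j x)))
      (f (dyadicPoint T (j + 1) (dyadicIndex T (j + 1) x))) ≤ b := by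
  have hdiv := dyadicIndex_eq_succ_div_two T x j
  have hle := dyadicIndex_le (j := j + 1) hT hx.2
  rw [← dyadicPoint_succ_two_mul]
  rcases (by omega : dyadicIndex T (j + 1) x = 2 * dyadicIndex T j x ∨
      dyadicIndex T (j + 1) x = 2 * dyadicIndex T j x + 1) with h | h
  · rw [h, dist_self]; exact hb
  · rw [h, dist_comm]; exact hstep _ (by omega)

lemma dist_dyadicPoint_dyadicIndex_le (hT : 0 < T) (hf : ContinuousOn f (Icc 0 T))
    (ha : ∀ j, 0 ≤ a j) (hsum : Summable a) (hstep : ∀ j, ∀ i < 2 ^ (m + j),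
      dist (f (dyadicPoint T (m + j) (i + 1))) (f (dyadicPoint T (m + j) i)) ≤ a (m + j))
    {x : ℝ} (hx : x ∈ Icc 0 T) :
    dist (f (dyadicPoint T m (dyadicIndex T m x))) (f x) ≤ ∑' j, a (m + j + 1) := by
  have hlim : Tendsto (fun j => dyadicPoint T (m + j) (dyadicIndex T (m + j) x)) atTop
      (𝓝[Icc 0 T] x) :=
    tendsto_nhdsWithin_iff.2 ⟨(tendsto_dyadicPoint_dyadicIndex hT hx.1).comp
      (tendsto_atTop_mono (fun j => Nat.le_add_left j m) tendsto_id),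
      Eventually.of_forall fun j => dyadicPoint_mem_Icc hT.le (dyadicIndex_le hT hx.2)⟩
  exact dist_le_tsum_of_dist_le_of_tendsto₀ (fun j => a (m + j + 1))
    (fun j => dist_dyadicPoint_dyadicIndex_succ_le hT hx (ha _) (hstep (j + 1)))
    ((summable_nat_add_iff (m + 1)).2 hsum |>.congr fun j => congrArg a (by omega))
    ((hf x hx).tendsto.comp hlim)

lemma dist_le_of_dyadic_increments_le (hT : 0 < T) (hf : ContinuousOn f (Icc 0 T))
    (ha : ∀ j, 0 ≤ a j) (hsum : Summable a) (hstep : ∀ j, ∀ i < 2 ^ (m + j),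
      dist (f (dyadicPoint T (m + j) (i + 1))) (f (dyadicPoint T (m + j) i)) ≤ a (m + j))
    {s t : ℝ} (hs : s ∈ Icc 0 T) (ht : t ∈ Icc 0 T) (hst : |t - s| ≤ T / 2 ^ m) :
    dist (f t) (f s) ≤ a m + 2 * ∑' j, a (m + j + 1) := by
  wlog h : s ≤ t generalizing s t
  · rw [dist_comm]; exact this ht hs (by rwa [abs_sub_comm]) (le_of_not_ge h)
  set is := dyadicIndex T m s
  set it := dyadicIndex T m t
  have hgrid : dist (f (dyadicPoint T m it)) (f (dyadicPoint T m is)) ≤ a m := by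
    have hmono : is ≤ it := dyadicIndex_mono hT h
    have hsucc : it ≤ is + 1 := dyadicIndex_le_add_one hT hs.1 ((le_abs_self _).trans hst)
    rcases (by omega : it = is ∨ it = is + 1) with h' | h'
    · rw [h', dist_self]; exact ha m
    · rw [h']; exact hstep 0 is (by have := dyadicIndex_le (j := m) hT ht.2; rw [add_zero]; omega)
  calc dist (f t) (f s)
      ≤ dist (f t) (f (dyadicPoint T m it)) + dist (f (dyadicPoint T m it))
          (f (dyadicPoint T m is)) + dist (f (dyadicPoint T m is)) (f s) := dist_triangle4 _ _ _ _
    _ ≤ ∑' j, a (m + j + 1) + a m + ∑' j, a (m + j + 1) := by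
      rw [dist_comm (f t)]
      gcongr
      · exact dist_dyadicPoint_dyadicIndex_le hT hf ha hsum hstep ht
      · exact dist_dyadicPoint_dyadicIndex_le hT hf ha hsum hstep hs
    _ = a m + 2 * ∑' j, a (m + j + 1) := by ring

end Chaining

lemma ENNReal.tendsto_atTop_zero_of_le_add {ι : Type*} {l : Filter ι} [l.NeBot] {f : ℕ → ℝ≥0∞}
    {c : ι → ℝ≥0∞} (hc : Tendsto c l (𝓝 0))
    (hf : ∀ᶠ i in l, ∃ g : ℕ → ℝ≥0∞, Tendsto g atTop (𝓝 0) ∧ ∀ n, f n ≤ c i + g n) :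
    Tendsto f atTop (𝓝 0) := by
  rw [ENNReal.tendsto_atTop_zero]
  intro ε hε
  have hε2 : (0 : ℝ≥0∞) < ε / 2 := ENNReal.half_pos hε.ne'
  obtain ⟨i, hci, g, hg, hfi⟩ := ((hc.eventually (gt_mem_nhds hε2)).and hf).exists
  obtain ⟨N, hN⟩ := eventually_atTop.1 (hg.eventually (gt_mem_nhds hε2))
  exact ⟨N, fun n hn => (hfi n).trans <|
    (add_le_add hci.le (hN n hn).le).trans_eq (ENNReal.add_halves ε)⟩

section Probability

variable {Ω : Type*} {mΩ : MeasurableSpace Ω} {P : Measure Ω}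

lemma measure_lt_le_lintegral_rpow_div {g : Ω → ℝ} (hg : AEMeasurable g P) {b k : ℝ}
    (hb : 0 < b) (hk : 0 < k) :
    P {ω | b < g ω} ≤ (∫⁻ ω, ENNReal.ofReal (g ω ^ k) ∂P) / ENNReal.ofReal (b ^ k) :=
  calc P {ω | b < g ω}
      ≤ P {ω | ENNReal.ofReal (b ^ k) ≤ ENNReal.ofReal (g ω ^ k)} := measure_mono fun _ hω =>
        ENNReal.ofReal_le_ofReal (Real.rpow_le_rpow hb.le (le_of_lt hω) hk.le)
    _ ≤ _ := meas_ge_le_lintegral_div (hg.pow_const k).ennreal_ofReal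
        (ENNReal.ofReal_pos.2 (Real.rpow_pos_of_pos hb k)).ne' ENNReal.ofReal_ne_top

lemma tendsto_measure_lt_of_tendsto_lintegral_rpow {g : ℕ → Ω → ℝ}
    (hg : ∀ n, AEMeasurable (g n) P) {k : ℝ} (hk : 0 < k)
    (h : Tendsto (fun n => ∫⁻ ω, ENNReal.ofReal (g n ω ^ k) ∂P) atTop (𝓝 0)) {b : ℝ}
    (hb : 0 < b) : Tendsto (fun n => P {ω | b < g n ω}) atTop (𝓝 0) := by
  have hlim := ENNReal.Tendsto.div_const h
    (Or.inr (ENNReal.ofReal_pos.2 (Real.rpow_pos_of_pos hb k)).ne')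
  rw [ENNReal.zero_div] at hlim
  exact tendsto_of_tendsto_of_tendsto_of_le_of_le tendsto_const_nhds hlim (fun n => zero_le)
    (fun n => measure_lt_le_lintegral_rpow_div (hg n) hb hk)

lemma lintegral_ofReal_rpow_le_add_measure_lt {Y : Ω → ℝ} {B θ p : ℝ} (hY0 : ∀ ω, 0 ≤ Y ω)
    (hYB : ∀ ω, Y ω ≤ B) (hp : 0 ≤ p) :
    ∫⁻ ω, ENNReal.ofReal (Y ω ^ p) ∂P
      ≤ ENNReal.ofReal (θ ^ p) * P univ + ENNReal.ofReal (B ^ p) * P {ω | θ < Y ω} := by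
  -- `{θ < Y}` need not be measurable; its measurable hull has the same measure.
  set A := toMeasurable P {ω | θ < Y ω}
  have hpt : ∀ ω, ENNReal.ofReal (Y ω ^ p)
      ≤ ENNReal.ofReal (θ ^ p) + A.indicator (fun _ => ENNReal.ofReal (B ^ p)) ω := by
    intro ω
    by_cases hω : θ < Y ω
    · rw [indicator_of_mem (show ω ∈ A from subset_toMeasurable P _ hω)]
      exact le_add_left (ENNReal.ofReal_le_ofReal
        (Real.rpow_le_rpow (hY0 ω) (hYB ω) hp))
    · exact le_add_right (ENNReal.ofReal_le_ofReal
        (Real.rpow_le_rpow (hY0 ω) (not_lt.1 hω) hp))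
  calc ∫⁻ ω, ENNReal.ofReal (Y ω ^ p) ∂P
      ≤ ∫⁻ ω, (ENNReal.ofReal (θ ^ p) + A.indicator (fun _ => ENNReal.ofReal (B ^ p)) ω) ∂P :=
        lintegral_mono hpt
    _ = _ := by
      rw [lintegral_add_left measurable_const, lintegral_const,
        lintegral_indicator_const (measurableSet_toMeasurable _ _), measure_toMeasurable]

theorem tendsto_lintegral_ofReal_rpow_of_tendsto_measure [IsFiniteMeasure P]
    {Y : ℕ → Ω → ℝ} {B : ℝ} (hY0 : ∀ n ω, 0 ≤ Y n ω) (hYB : ∀ n ω, Y n ω ≤ B)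
    (hY : ∀ θ > 0, Tendsto (fun n => P {ω | θ < Y n ω}) atTop (𝓝 0)) {p : ℝ} (hp : 0 < p) :
    Tendsto (fun n => ∫⁻ ω, ENNReal.ofReal (Y n ω ^ p) ∂P) atTop (𝓝 0) := by
  have hc : Tendsto (fun θ : ℝ => ENNReal.ofReal (θ ^ p) * P univ) (𝓝[>] 0) (𝓝 0) := by
    have hpow : Tendsto (fun θ : ℝ => ENNReal.ofReal (θ ^ p)) (𝓝 0) (𝓝 0) := by
      simpa [Function.comp_def, Real.zero_rpow hp.ne'] using
        (ENNReal.continuous_ofReal.tendsto _).comp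
          (Real.continuousAt_rpow_const 0 p (Or.inr hp.le)).tendsto
    simpa using (ENNReal.Tendsto.mul_const hpow (Or.inr (measure_ne_top P univ))).mono_left
      nhdsWithin_le_nhds
  refine ENNReal.tendsto_atTop_zero_of_le_add hc (eventually_nhdsWithin_of_forall fun θ hθ => ?_)
  refine ⟨_, ?_, fun n => lintegral_ofReal_rpow_le_add_measure_lt (hY0 n) (hYB n) hp.le⟩
  simpa using ENNReal.Tendsto.const_mul (hY θ hθ) (Or.inr ENNReal.ofReal_ne_top)

variable {E : Type*} [PseudoMetricSpace E] {T : ℝ}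

def modulusExceeds (T h δ : ℝ) (Z : ℝ → Ω → E) : Set Ω :=
  {ω | ∃ s ∈ Icc 0 T, ∃ t ∈ Icc 0 T, |t - s| ≤ h ∧ δ < dist (Z t ω) (Z s ω)}

lemma modulusExceeds_subset_iUnion (hT : 0 < T) {Z : ℝ → Ω → E}
    (hZ : ∀ ω, ContinuousOn (fun t => Z t ω) (Icc 0 T)) {a : ℕ → ℝ} (ha : ∀ j, 0 ≤ a j)
    (hsum : Summable a) (m : ℕ) :
    modulusExceeds T (T / 2 ^ m) (a m + 2 * ∑' j, a (m + j + 1)) Z ⊆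
      ⋃ j, ⋃ i ∈ Finset.range (2 ^ (m + j)), {ω | a (m + j) <
        dist (Z (dyadicPoint T (m + j) (i + 1)) ω) (Z (dyadicPoint T (m + j) i) ω)} := by
  rintro ω ⟨s, hs, t, ht, hst, hlt⟩
  by_contra hω
  simp only [mem_iUnion, mem_ofPred_eq, Finset.mem_range, not_exists, not_lt] at hω
  exact hlt.not_ge (dist_le_of_dyadic_increments_le hT (hZ ω) ha hsum hω hs ht hst)

lemma setOf_exists_lt_dist_subset_union_modulusExceeds (hT : 0 < T) {Zn Z : ℝ → Ω → E}
    {δ ε θ : ℝ} (hθ : 2 * δ + ε ≤ θ) (m : ℕ) :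
    {ω | ∃ t ∈ Icc 0 T, θ < dist (Zn t ω) (Z t ω)} ⊆
      modulusExceeds T (T / 2 ^ m) δ Zn ∪ modulusExceeds T (T / 2 ^ m) δ Z ∪
        ⋃ i ∈ Finset.range (2 ^ m + 1),
          {ω | ε < dist (Zn (dyadicPoint T m i) ω) (Z (dyadicPoint T m i) ω)} := by
  rintro ω ⟨t, ht, hlt⟩
  by_contra hω
  simp only [modulusExceeds, mem_union, mem_iUnion, mem_ofPred_eq, Finset.mem_range, not_or,
    not_exists, not_and, not_lt] at hω
  obtain ⟨⟨hZn, hZ⟩, hgrid⟩ := hω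
  have hi : dyadicIndex T m t ≤ 2 ^ m := dyadicIndex_le hT ht.2
  set u := dyadicPoint T m (dyadicIndex T m t)
  have hu : u ∈ Icc 0 T := dyadicPoint_mem_Icc hT.le hi
  have htu : |t - u| ≤ T / 2 ^ m := by
    rw [abs_of_nonneg (sub_nonneg.2 (dyadicPoint_dyadicIndex_le hT ht.1))]
    linarith [lt_dyadicPoint_dyadicIndex_add (j := m) (x := t) hT]
  have := dist_triangle4 (Zn t ω) (Zn u ω) (Z u ω) (Z t ω)
  rw [dist_comm (Z u ω)] at this
  linarith [hZn u hu t ht htu, hZ u hu t ht htu, hgrid _ (Nat.lt_succ_of_le hi)]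

theorem tendsto_measure_exists_lt_dist (hT : 0 < T) {Zn : ℕ → ℝ → Ω → E} {Z : ℝ → Ω → E}
    {δ : ℕ → ℝ} {c : ℕ → ℝ≥0∞}
    (hZn : ∀ n m, P (modulusExceeds T (T / 2 ^ m) (δ m) (Zn n)) ≤ c m)
    (hZ : ∀ m, P (modulusExceeds T (T / 2 ^ m) (δ m) Z) ≤ c m)
    (hδ : Tendsto δ atTop (𝓝 0)) (hc : Tendsto c atTop (𝓝 0))
    (hfdd : ∀ t ∈ Icc 0 T, ∀ ε > 0,
      Tendsto (fun n => P {ω | ε < dist (Zn n t ω) (Z t ω)}) atTop (𝓝 0)) :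
    ∀ θ > 0,
      Tendsto (fun n => P {ω | ∃ t ∈ Icc 0 T, θ < dist (Zn n t ω) (Z t ω)}) atTop (𝓝 0) := by
  intro θ hθ
  refine ENNReal.tendsto_atTop_zero_of_le_add (c := fun m => c m + c m)
    (by simpa using hc.add hc) ?_
  filter_upwards [hδ.eventually (gt_mem_nhds (by positivity : (0 : ℝ) < θ / 4))] with m hm
  refine ⟨fun n => ∑ i ∈ Finset.range (2 ^ m + 1), P {ω | θ / 2 <
    dist (Zn n (dyadicPoint T m i) ω) (Z (dyadicPoint T m i) ω)}, ?_, fun n => ?_⟩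
  · simpa using tendsto_finsetSum _ fun i hi => hfdd _ (dyadicPoint_mem_Icc hT.le
      (Nat.lt_succ_iff.1 (Finset.mem_range.1 hi))) _ (half_pos hθ)
  · refine (measure_mono (setOf_exists_lt_dist_subset_union_modulusExceeds
      (δ := δ m) (ε := θ / 2) hT (by linarith) m)).trans ?_
    exact (measure_union_le _ _).trans (add_le_add ((measure_union_le _ _).trans
      (add_le_add (hZn n m) (hZ m))) (measure_biUnion_finset_le _ _))

variable [MeasurableSpace E] [OpensMeasurableSpace E] [SecondCountableTopology E]

lemma measure_dyadic_increment_lt_le (hT : 0 < T) {Z : ℝ → Ω → E}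
    (hZm : ∀ t, Measurable (Z t)) {k l C b : ℝ} (hk : 0 < k) (hb : 0 < b)
    (hmom : ∀ s ∈ Icc 0 T, ∀ t ∈ Icc 0 T,
      ∫⁻ ω, ENNReal.ofReal (dist (Z t ω) (Z s ω) ^ k) ∂P ≤ ENNReal.ofReal (C * |t - s| ^ l))
    {j i : ℕ} (hi : i < 2 ^ j) :
    P {ω | b < dist (Z (dyadicPoint T j (i + 1)) ω) (Z (dyadicPoint T j i) ω)}
      ≤ ENNReal.ofReal (C * (T / 2 ^ j) ^ l / b ^ k) := by
  have hmom' := hmom _ (dyadicPoint_mem_Icc hT.le hi.le) _ (dyadicPoint_mem_Icc hT.le hi)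
  rw [dyadicPoint_succ_sub, abs_of_pos (by positivity)] at hmom'
  calc _ ≤ (∫⁻ ω, ENNReal.ofReal (dist (Z (dyadicPoint T j (i + 1)) ω)
          (Z (dyadicPoint T j i) ω) ^ k) ∂P) / ENNReal.ofReal (b ^ k) :=
        measure_lt_le_lintegral_rpow_div ((hZm _).dist (hZm _)).aemeasurable hb hk
    _ ≤ ENNReal.ofReal (C * (T / 2 ^ j) ^ l) / ENNReal.ofReal (b ^ k) := by gcongr
    _ = _ := (ENNReal.ofReal_div_of_pos (by positivity)).symm

theorem measure_modulusExceeds_le (hT : 0 < T) {Z : ℝ → Ω → E}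
    (hZm : ∀ t, Measurable (Z t)) (hZc : ∀ ω, ContinuousOn (fun t => Z t ω) (Icc 0 T))
    {k l C r : ℝ} (hk : 0 < k) (hC : 0 ≤ C) (hr0 : 0 < r) (hr1 : r < 1)
    (hq : 2 < 2 ^ l * r ^ k)
    (hmom : ∀ s ∈ Icc 0 T, ∀ t ∈ Icc 0 T,
      ∫⁻ ω, ENNReal.ofReal (dist (Z t ω) (Z s ω) ^ k) ∂P ≤ ENNReal.ofReal (C * |t - s| ^ l))
    (m : ℕ) :
    P (modulusExceeds T (T / 2 ^ m) (r ^ m * (1 + r) / (1 - r)) Z)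
      ≤ ENNReal.ofReal (C * T ^ l * (2 / (2 ^ l * r ^ k)) ^ m / (1 - 2 / (2 ^ l * r ^ k))) := by
  set q := 2 / (2 ^ l * r ^ k)
  have hq0 : 0 ≤ q := by positivity
  have hq1 : q < 1 := (div_lt_one (by positivity)).2 hq
  have hthreshold : r ^ m * (1 + r) / (1 - r) = r ^ m + 2 * ∑' j, r ^ (m + j + 1) := by
    simp_rw [pow_add, pow_one, mul_right_comm _ _ r]
    rw [tsum_mul_left, tsum_geometric_of_lt_one hr0.le hr1]
    field_simp [(sub_pos.2 hr1).ne']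
    ring
  have hlevel : ∀ j, ∑ i ∈ Finset.range (2 ^ j), P {ω | r ^ j <
      dist (Z (dyadicPoint T j (i + 1)) ω) (Z (dyadicPoint T j i) ω)}
        ≤ ENNReal.ofReal (C * T ^ l * q ^ j) := by
    -- `2 ^ j · C (T / 2 ^ j) ^ l / r ^ (j k) = C T ^ l q ^ j`: this is where `q` comes from.
    intro j
    refine (Finset.sum_le_card_nsmul _ _ _ fun i hi => measure_dyadic_increment_lt_le hT hZm hk
      (pow_pos hr0 j) hmom (Finset.mem_range.1 hi)).trans_eq ?_
    rw [Finset.card_range, nsmul_eq_mul, ← ENNReal.ofReal_natCast,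
      ← ENNReal.ofReal_mul (by positivity)]
    congr 1
    rw [Real.div_rpow hT.le (by positivity), ← Real.rpow_pow_comm (by norm_num),
      ← Real.rpow_pow_comm hr0.le, div_pow, mul_pow]
    push_cast
    field_simp
  calc P (modulusExceeds T (T / 2 ^ m) (r ^ m * (1 + r) / (1 - r)) Z)
      ≤ ∑' j, ∑ i ∈ Finset.range (2 ^ (m + j)), P {ω | r ^ (m + j) <
          dist (Z (dyadicPoint T (m + j) (i + 1)) ω) (Z (dyadicPoint T (m + j) i) ω)} := by
        rw [hthreshold]
        refine (measure_mono (modulusExceeds_subset_iUnion hT hZc (fun j => by positivity)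
          (summable_geometric_of_lt_one hr0.le hr1) m)).trans ?_
        exact (measure_iUnion_le _).trans
          (ENNReal.tsum_le_tsum fun j => measure_biUnion_finset_le _ _)
    _ ≤ ∑' j, ENNReal.ofReal (C * T ^ l * q ^ (m + j)) :=
        ENNReal.tsum_le_tsum fun j => hlevel (m + j)
    _ = _ := by
      rw [← ENNReal.ofReal_tsum_of_nonneg (fun j => by positivity)
        ((summable_geometric_of_lt_one hq0 hq1).mul_left (C * T ^ l * q ^ m) |>.congr
          fun j => by rw [pow_add, mul_assoc])]
      simp_rw [pow_add, ← mul_assoc]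
      rw [tsum_mul_left, tsum_geometric_of_lt_one hq0 hq1, div_eq_mul_inv]

theorem tendsto_measure_exists_lt_dist_of_moment_le (hT : 0 < T) {Zn : ℕ → ℝ → Ω → E}
    {Z : ℝ → Ω → E} (hZnm : ∀ n t, Measurable (Zn n t)) (hZm : ∀ t, Measurable (Z t))
    (hZnc : ∀ n ω, ContinuousOn (fun t => Zn n t ω) (Icc 0 T))
    (hZc : ∀ ω, ContinuousOn (fun t => Z t ω) (Icc 0 T))
    {k l C₁ C₂ r : ℝ} (hk : 0 < k) (hr0 : 0 < r) (hr1 : r < 1) (hq : 2 < 2 ^ l * r ^ k)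
    (hmomn : ∀ n, ∀ s ∈ Icc 0 T, ∀ t ∈ Icc 0 T, ∫⁻ ω, ENNReal.ofReal
      (dist (Zn n t ω) (Zn n s ω) ^ k) ∂P ≤ ENNReal.ofReal (C₁ * |t - s| ^ l))
    (hmom : ∀ s ∈ Icc 0 T, ∀ t ∈ Icc 0 T,
      ∫⁻ ω, ENNReal.ofReal (dist (Z t ω) (Z s ω) ^ k) ∂P ≤ ENNReal.ofReal (C₂ * |t - s| ^ l))
    (hfdd : ∀ t ∈ Icc 0 T, ∀ ε > 0,
      Tendsto (fun n => P {ω | ε < dist (Zn n t ω) (Z t ω)}) atTop (𝓝 0)) :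
    ∀ θ > 0,
      Tendsto (fun n => P {ω | ∃ t ∈ Icc 0 T, θ < dist (Zn n t ω) (Z t ω)}) atTop (𝓝 0) := by
  set C := max (max C₁ C₂) 0
  have hC : ∀ {C'}, C' ≤ C → ∀ s t : ℝ,
      ENNReal.ofReal (C' * |t - s| ^ l) ≤ ENNReal.ofReal (C * |t - s| ^ l) :=
    fun h s t => ENNReal.ofReal_le_ofReal (by gcongr)
  refine tendsto_measure_exists_lt_dist hT
    (fun n => measure_modulusExceeds_le hT (hZnm n) (hZnc n) hk (le_max_right _ _) hr0 hr1 hq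
      fun s hs t ht => (hmomn n s hs t ht).trans
        (hC ((le_max_left _ _).trans (le_max_left _ _)) s t))
    (measure_modulusExceeds_le hT hZm hZc hk (le_max_right _ _) hr0 hr1 hq
      fun s hs t ht => (hmom s hs t ht).trans
        (hC ((le_max_right _ _).trans (le_max_left _ _)) s t))
    ?_ ?_ hfdd
  · simpa using ((tendsto_pow_atTop_nhds_zero_of_lt_one hr0.le hr1).mul_const (1 + r)).div_const
      (1 - r)
  · have h := ((tendsto_pow_atTop_nhds_zero_of_lt_one (by positivity)
      ((div_lt_one (by positivity)).2 hq)).const_mul (C * T ^ l)).div_const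
        (1 - 2 / (2 ^ l * r ^ k))
    rw [mul_zero, zero_div] at h
    exact ENNReal.ofReal_zero ▸ ENNReal.tendsto_ofReal h

end Probability

/-- Let `D̄` be a bounded subset of `ℝ^d` and let `Xⁿ` and `X` be
continuous `D̄`-valued processes on `[0, T]`.  Suppose for every `p ≥ 2` there are
constants `C₁(p)` (independent of `n`) and `C₂(p)` such that
`E[|Xⁿ(t) − Xⁿ(s)|^p] ≤ C₁(p) |t − s|^{p/2}` for all `n`, and
`E[|X(t) − X(s)|^p] ≤ C₂(p) |t − s|^{p/2}`, for all `s, t ∈ [0, T]`.  If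
`lim_n E[|Xⁿ(t) − X(t)|²] = 0` for every fixed `t ∈ [0, T]`, then for every `p > 0`,
`lim_n E[sup_{0 ≤ t ≤ T} |Xⁿ(t) − X(t)|^p] = 0`. -/
theorem strong_convergence_from_moment_bounds_and_L2
    {Ω : Type*} {m0 : MeasurableSpace Ω} (P : Measure Ω) [IsProbabilityMeasure P]
    {d : ℕ} (T : ℝ) (hT : 0 < T)
    (Dbar : Set (EuclideanSpace ℝ (Fin d))) (hDbar : Bornology.IsBounded Dbar)
    (Xn : ℕ → ℝ → Ω → EuclideanSpace ℝ (Fin d))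
    (X : ℝ → Ω → EuclideanSpace ℝ (Fin d))
    (hXnmeas : ∀ n t, Measurable (Xn n t)) (hXmeas : ∀ t, Measurable (X t))
    (hXncont : ∀ n ω, ContinuousOn (fun t => Xn n t ω) (Icc 0 T))
    (hXcont : ∀ ω, ContinuousOn (fun t => X t ω) (Icc 0 T))
    (hXnmem : ∀ n ω, ∀ t ∈ Icc (0 : ℝ) T, Xn n t ω ∈ Dbar)
    (hXmem : ∀ ω, ∀ t ∈ Icc (0 : ℝ) T, X t ω ∈ Dbar)
    (hmomn : ∀ p : ℝ, 2 ≤ p → ∃ C₁ : ℝ, ∀ n : ℕ,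
      ∀ s ∈ Icc (0 : ℝ) T, ∀ t ∈ Icc (0 : ℝ) T,
        (∫⁻ ω, ENNReal.ofReal (‖Xn n t ω - Xn n s ω‖ ^ p) ∂P)
          ≤ ENNReal.ofReal (C₁ * |t - s| ^ (p / 2)))
    (hmom : ∀ p : ℝ, 2 ≤ p → ∃ C₂ : ℝ,
      ∀ s ∈ Icc (0 : ℝ) T, ∀ t ∈ Icc (0 : ℝ) T,
        (∫⁻ ω, ENNReal.ofReal (‖X t ω - X s ω‖ ^ p) ∂P)
          ≤ ENNReal.ofReal (C₂ * |t - s| ^ (p / 2)))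
    (hL2 : ∀ t ∈ Icc (0 : ℝ) T,
      Tendsto (fun n => ∫⁻ ω, ENNReal.ofReal (‖Xn n t ω - X t ω‖ ^ 2) ∂P)
        atTop (𝓝 0)) :
    ∀ p : ℝ, 0 < p →
      Tendsto (fun n => ∫⁻ ω,
          ENNReal.ofReal ((⨆ t : Icc (0 : ℝ) T, ‖Xn n t.1 ω - X t.1 ω‖) ^ p) ∂P)
        atTop (𝓝 0) := by
  intro p hp
  have : Nonempty (Icc (0 : ℝ) T) := ⟨⟨0, le_rfl, hT.le⟩⟩
  obtain ⟨C₁, hC₁⟩ := hmomn 4 (by norm_num)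
  obtain ⟨C₂, hC₂⟩ := hmom 4 (by norm_num)
  have hunif := tendsto_measure_exists_lt_dist_of_moment_le hT hXnmeas hXmeas hXncont hXcont
    (k := 4) (l := 4 / 2) (r := 9 / 10) (by norm_num) (by norm_num) (by norm_num) (by norm_num)
    (by simpa only [dist_eq_norm] using hC₁) (by simpa only [dist_eq_norm] using hC₂)
    (fun t ht ε hε => tendsto_measure_lt_of_tendsto_lintegral_rpow
      (fun n => ((hXnmeas n t).dist (hXmeas t)).aemeasurable) two_pos
      (by simpa only [dist_eq_norm, Real.rpow_two] using hL2 t ht) hε)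
  refine tendsto_lintegral_ofReal_rpow_of_tendsto_measure
    (Y := fun n ω => ⨆ t : Icc (0 : ℝ) T, ‖Xn n t.1 ω - X t.1 ω‖) (B := Metric.diam Dbar)
    (fun n ω => Real.iSup_nonneg fun t => norm_nonneg _) (fun n ω => ciSup_le fun t => ?_)
    (fun θ hθ => ?_) hp
  · rw [← dist_eq_norm]
    exact Metric.dist_le_diam_of_mem hDbar (hXnmem n ω t t.2) (hXmem ω t t.2)
  · refine tendsto_of_tendsto_of_tendsto_of_le_of_le tendsto_const_nhds (hunif θ hθ)
      (fun _ => zero_le) fun n => measure_mono fun ω hω => ?_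
    obtain ⟨t, ht⟩ := exists_lt_of_lt_ciSup (show θ < _ from hω)
    exact ⟨t, t.2, by rwa [dist_eq_norm]⟩
end
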